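/- arXiv:2305.04378 — 4 statements merged into one kernel-verified Lean document; each statement's English description precedes it below -/
import Mathlib

section
/- Let r ≥ 2, let m̂ = ⌈(√(9+8r) − 5)/2⌉ and γ = (m̂+1)(2r−m̂)/(2(m̂+2)). Define β(m) = γ(m+1) − m(2r−m+1)/2 for integers m ≥ 0. Then for 0 ≤ m < m̂, β(m) − β(m+1) > 1; consequently m ↦ β(m) + m is strictly decreasing on [0, m̂], and β(m) + m ≤ γ for all 0 ≤ m ≤ m̂. -/
/-- Let `r ≥ 2`, `m̂ = ⌈(√(9+8r) − 5)/2⌉`, `γ = (m̂+1)(2r−m̂)/(2(m̂+2))`, and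
`β(m) = γ(m+1) − m(2r−m+1)/2`. Then for `0 ≤ m < m̂`, `β(m) − β(m+1) > 1`;
consequently `m ↦ β(m) + m` is strictly decreasing on `[0, m̂]`, and
`β(m) + m ≤ γ` for all `0 ≤ m ≤ m̂`. -/
theorem stmt1 (r : ℤ) (hr : 2 ≤ r)
    (mhat : ℤ) (hmhat : mhat = ⌈(Real.sqrt (9 + 8 * (r : ℝ)) - 5) / 2⌉)
    (γ : ℝ) (hγ : γ = ((mhat : ℝ) + 1) * (2 * (r : ℝ) - (mhat : ℝ)) / (2 * ((mhat : ℝ) + 2)))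
    (β : ℤ → ℝ)
    (hβ : ∀ m : ℤ, β m = γ * ((m : ℝ) + 1) - (m : ℝ) * (2 * (r : ℝ) - (m : ℝ) + 1) / 2) :
    (∀ m : ℤ, 0 ≤ m → m < mhat → β m - β (m + 1) > 1) ∧
    StrictAntiOn (fun m : ℤ => β m + (m : ℝ)) (Set.Icc 0 mhat) ∧
    (∀ m : ℤ, 0 ≤ m → m ≤ mhat → β m + (m : ℝ) ≤ γ) := by
  have hsqrt5 : (5:ℝ) ≤ Real.sqrt (9 + 8 * (r : ℝ)) := by
    rw [show (5:ℝ) = Real.sqrt 25 by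
      rw [show (25:ℝ) = 5^2 by norm_num, Real.sqrt_sq (by norm_num)]]
    apply Real.sqrt_le_sqrt
    have : (2:ℝ) ≤ (r:ℝ) := by exact_mod_cast hr
    linarith
  have hm0 : 0 ≤ mhat := by
    rw [hmhat]
    apply Int.ceil_nonneg
    linarith
  have hm0R : (0:ℝ) ≤ (mhat:ℝ) := by exact_mod_cast hm0
  -- key: m̂² + 3m̂ < 2r
  have hceil : (mhat:ℝ) < (Real.sqrt (9 + 8 * (r : ℝ)) - 5) / 2 + 1 := by
    rw [hmhat]; exact Int.ceil_lt_add_one _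
  have hlt : 2 * (mhat:ℝ) + 3 < Real.sqrt (9 + 8 * (r : ℝ)) := by linarith
  have hsq : (2 * (mhat:ℝ) + 3)^2 < 9 + 8 * (r:ℝ) := by
    exact (Real.lt_sqrt (by positivity)).mp hlt
  have hkeyZ : mhat^2 + 3 * mhat < 2 * r := by
    have : ((2 * mhat + 3 : ℤ) : ℝ)^2 < ((9 + 8 * r : ℤ) : ℝ) := by push_cast; push_cast at hsq; linarith
    have h2 : (2 * mhat + 3)^2 < 9 + 8 * r := by exact_mod_cast this
    nlinarith
  have hkey : (mhat:ℝ)^2 + 3 * (mhat:ℝ) + 1 ≤ 2 * (r:ℝ) := by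
    have : mhat^2 + 3 * mhat + 1 ≤ 2 * r := hkeyZ
    exact_mod_cast this
  have hden : (0:ℝ) < 2 * ((mhat:ℝ) + 2) := by linarith
  have hγlt : γ < (r:ℝ) - (mhat:ℝ) := by
    rw [hγ, div_lt_iff₀ hden]
    nlinarith
  have hdiff : ∀ m : ℤ, β m - β (m + 1) = (r:ℝ) - (m:ℝ) - γ := by
    intro m
    rw [hβ m, hβ (m+1)]
    push_cast
    ring
  have part1 : ∀ m : ℤ, 0 ≤ m → m < mhat → β m - β (m + 1) > 1 := by
    intro m _ hmlt
    rw [hdiff m]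
    have : (m:ℝ) ≤ (mhat:ℝ) - 1 := by
      have h1 : m ≤ mhat - 1 := by omega
      have h2 : (m:ℝ) ≤ ((mhat - 1 : ℤ):ℝ) := by exact_mod_cast h1
      push_cast at h2; linarith
    linarith
  have part2 : StrictAntiOn (fun m : ℤ => β m + (m : ℝ)) (Set.Icc 0 mhat) := by
    intro a ha b hb hab
    simp only
    have ha1 : (0:ℝ) ≤ (a:ℝ) := by exact_mod_cast ha.1
    have hb2 : (b:ℝ) ≤ (mhat:ℝ) := by exact_mod_cast hb.2
    have hab' : (a:ℝ) + 1 ≤ (b:ℝ) := by exact_mod_cast (by omega : a + 1 ≤ b)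
    have ha2 : (a:ℝ) ≤ (mhat:ℝ) - 1 := by linarith
    rw [hβ a, hβ b]
    nlinarith [mul_pos (by linarith : (0:ℝ) < (b:ℝ) - (a:ℝ))
      (by linarith : (0:ℝ) < (r:ℝ) - (mhat:ℝ) - γ)]
  have part3 : ∀ m : ℤ, 0 ≤ m → m ≤ mhat → β m + (m : ℝ) ≤ γ := by
    intro m h0 hle
    have hβ0 : β 0 + ((0:ℤ):ℝ) = γ := by rw [hβ 0]; push_cast; ring
    rcases eq_or_lt_of_le h0 with h | h
    · rw [← h, ← hβ0]
    · have := part2 (Set.mem_Icc.mpr ⟨le_refl 0, hm0⟩) (Set.mem_Icc.mpr ⟨h0, hle⟩) h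
      simp only at this
      rw [hβ0] at this
      linarith
  exact ⟨part1, part2, part3⟩
end

section
/- For the cellular automaton on ℤ² with cross neighborhoods of range ρ and zero-set 𝒵 of height h ≤ ρ, an initially occupied vertical interval of h consecutive sites generates an occupied set that contains the entire vertical line through it, and the resulting full vertical line is inert when 𝒵 has width at least max(h,2). -/
open scoped Classical

/-- Horizontal part of the cross neighborhood of radius `ρ` at `x`. -/
noncomputable def nbrH (ρ : ℕ) (x : ℤ × ℤ) : Finset (ℤ × ℤ) :=
  (Finset.Icc (-(ρ : ℤ)) (ρ : ℤ)).image fun i => (x.1 + i, x.2)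

/-- Vertical part of the cross neighborhood of radius `ρ` at `x`. -/
noncomputable def nbrV (ρ : ℕ) (x : ℤ × ℤ) : Finset (ℤ × ℤ) :=
  (Finset.Icc (-(ρ : ℤ)) (ρ : ℤ)).image fun i => (x.1, x.2 + i)

/-- One step of the growth dynamics with zero-set `Z` and range `ρ`:
a site becomes occupied iff its pair of horizontal/vertical occupied counts lies
outside `Z`. -/
noncomputable def caStep (Z : Set (ℕ × ℕ)) (ρ : ℕ) (ξ : Set (ℤ × ℤ)) : Set (ℤ × ℤ) :=
  ξ ∪ {x | (((nbrH ρ x).filter fun y => y ∈ ξ).card,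
            ((nbrV ρ x).filter fun y => y ∈ ξ).card) ∉ Z}

lemma vcount_ge (ρ h : ℕ) (ξ : Set (ℤ × ℤ)) (x : ℤ × ℤ)
    (s : ℤ) (hs1 : -(ρ:ℤ) ≤ s) (hs2 : s + h - 1 ≤ ρ)
    (hmem : ∀ i ∈ Finset.Icc s (s + h - 1), (x.1, x.2 + i) ∈ ξ) :
    h ≤ ((nbrV ρ x).filter fun y => y ∈ ξ).card := by
  have hinj : Function.Injective (fun i : ℤ => (x.1, x.2 + i)) := by
    intro a b hab
    simpa using hab
  have hsub : (Finset.Icc s (s + h - 1)).image (fun i => (x.1, x.2 + i)) ⊆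
      (nbrV ρ x).filter fun y => y ∈ ξ := by
    intro y hy
    simp only [Finset.mem_image] at hy
    obtain ⟨i, hi, rfl⟩ := hy
    rw [Finset.mem_filter]
    refine ⟨?_, hmem i hi⟩
    rw [nbrV, Finset.mem_image]
    refine ⟨i, ?_, rfl⟩
    rw [Finset.mem_Icc] at hi ⊢
    constructor
    · linarith [hi.1]
    · linarith [hi.2]
  have hcard : ((Finset.Icc s (s + h - 1)).image (fun i => (x.1, x.2 + i))).card = h := by
    rw [Finset.card_image_of_injective _ hinj, Int.card_Icc]
    have : s + (h:ℤ) - 1 + 1 - s = h := by ring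
    rw [this, Int.toNat_natCast]
  calc h = _ := hcard.symm
    _ ≤ _ := Finset.card_le_card hsub

lemma grow (Z : Set (ℕ × ℕ)) (ρ h : ℕ)
    (hZ : ∀ u v u' v' : ℕ, (u, v) ∈ Z → u' ≤ u → v' ≤ v → (u', v') ∈ Z)
    (hhρ : h ≤ ρ) (hZh : (0, h) ∉ Z) :
    ∀ t : ℕ, ∀ x : ℤ × ℤ, x.1 = 0 → -(t:ℤ) ≤ x.2 → x.2 < (h:ℤ) + t →
      x ∈ (caStep Z ρ)^[t] {x : ℤ × ℤ | x.1 = 0 ∧ 0 ≤ x.2 ∧ x.2 < (h : ℤ)} := by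
  intro t
  induction t with
  | zero =>
      intro x hx1 hx2 hx3
      exact ⟨hx1, by simpa using hx2, by simpa using hx3⟩
  | succ t ih =>
      intro x hx1 hx2 hx3
      rw [Function.iterate_succ_apply']
      set ξ := (caStep Z ρ)^[t] {x : ℤ × ℤ | x.1 = 0 ∧ 0 ≤ x.2 ∧ x.2 < (h : ℤ)} with hξ
      by_cases hcase : -(t:ℤ) ≤ x.2 ∧ x.2 < (h:ℤ) + t
      · exact Set.mem_union_left _ (ih x hx1 hcase.1 hcase.2)
      · -- boundary case: find s so that the interval x.2 + [s, s+h-1] lies in ξ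
        have key : ∃ s : ℤ, -(ρ:ℤ) ≤ s ∧ s + h - 1 ≤ ρ ∧
            ∀ i ∈ Finset.Icc s (s + (h:ℤ) - 1), (x.1, x.2 + i) ∈ ξ := by
          push_neg at hcase
          push_cast at hx2 hx3 hcase ⊢
          by_cases htop : x.2 = (h:ℤ) + t
          · refine ⟨-(h:ℤ), by exact_mod_cast neg_le_neg (by exact_mod_cast hhρ), by push_cast; linarith, ?_⟩
            intro i hi
            rw [Finset.mem_Icc] at hi
            apply ih (x.1, x.2 + i) hx1
            · simp only; linarith [hi.1]
            · simp only; linarith [hi.2]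
          · have hbot : x.2 = -((t:ℤ)+1) := by omega
            refine ⟨1, by linarith [Int.natCast_nonneg ρ], by push_cast; linarith, ?_⟩
            intro i hi
            rw [Finset.mem_Icc] at hi
            apply ih (x.1, x.2 + i) hx1
            · simp only; omega
            · simp only; push_cast; omega
        obtain ⟨s, hs1, hs2, hmem⟩ := key
        have hv : h ≤ ((nbrV ρ x).filter fun y => y ∈ ξ).card :=
          vcount_ge ρ h ξ x s hs1 hs2 hmem
        apply Set.mem_union_right
        intro hmemZ
        exact hZh (hZ _ _ 0 h hmemZ (Nat.zero_le _) hv)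

/-- For a zero-set `Z` of height `h ≤ ρ`, an initially occupied vertical interval
of `h` consecutive sites generates the whole vertical line through it; moreover a
full vertical line is inert when `Z` has width at least `max h 2`. -/
theorem stmt9 (Z : Set (ℕ × ℕ)) (ρ h : ℕ)
    (hZ : ∀ u v u' v' : ℕ, (u, v) ∈ Z → u' ≤ u → v' ≤ v → (u', v') ∈ Z)
    (hh : 1 ≤ h) (hhρ : h ≤ ρ)
    (hheight : (0, h - 1) ∈ Z ∧ (0, h) ∉ Z)
    (hwidth : (max h 2 - 1, 0) ∈ Z) :
    ({x : ℤ × ℤ | x.1 = 0} ⊆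
      ⋃ t : ℕ, (caStep Z ρ)^[t] {x : ℤ × ℤ | x.1 = 0 ∧ 0 ≤ x.2 ∧ x.2 < (h : ℤ)}) ∧
    caStep Z ρ {x : ℤ × ℤ | x.1 = 0} = {x : ℤ × ℤ | x.1 = 0} := by
  constructor
  · intro x hx
    rw [Set.mem_iUnion]
    refine ⟨x.2.natAbs + 1, grow Z ρ h hZ hhρ hheight.2 _ x hx ?_ ?_⟩
    · push_cast
      linarith [neg_abs_le x.2]
    · push_cast
      have h1 : (1:ℤ) ≤ h := by exact_mod_cast hh
      linarith [le_abs_self x.2]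
  · apply Set.Subset.antisymm
    · intro x hx
      rcases hx with hx | hx
      · exact hx
      · by_contra hx1
        apply hx
        refine hZ (max h 2 - 1) 0 _ _ hwidth ?_ ?_
        · refine le_trans ?_ (by omega : 1 ≤ max h 2 - 1)
          rw [Finset.card_le_one]
          intro a ha b hb
          simp only [Finset.mem_filter, nbrH, Finset.mem_image, Set.mem_setOf_eq] at ha hb
          obtain ⟨⟨i, hi, rfl⟩, ha2⟩ := ha
          obtain ⟨⟨j, hj, rfl⟩, hb2⟩ := hb
          simp only at ha2 hb2
          have : i = j := by omega
          simp [this]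
        · simp only [Nat.le_zero, Finset.card_eq_zero, Finset.filter_eq_empty_iff]
          intro y hy
          simp only [nbrV, Finset.mem_image] at hy
          obtain ⟨i, _, rfl⟩ := hy
          simpa using hx1
    · exact Set.subset_union_left
end

section
/- Packed strips span: for bootstrap percolation with threshold r (𝒵 = {(u,v) : u+v ≤ r−1}) on B_n with range ρ ≥ r, suppose some strip of r consecutive rows is packed: its bottom row contains a contiguous interval of r occupied sites, the next row a contiguous interval of r−1 occupied sites, …, the top row a contiguous interval of 1 occupied site, all intervals within horizontal distance ρ of each other. Then B_n is spanned (entirely occupied) in at most (r+1)n time steps. -/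
open scoped Classical

/-- The box \`B_n = [0,n−1]²\` in \`ℤ²\`. -/
def caBox (n : ℕ) : Set (ℤ × ℤ) :=
  {x | 0 ≤ x.1 ∧ x.1 < (n : ℤ) ∧ 0 ≤ x.2 ∧ x.2 < (n : ℤ)}

/-- One step of the dynamics on \`B_n\` with \`0\`-boundary. -/
noncomputable def caStepBox (Z : Set (ℕ × ℕ)) (ρ n : ℕ) (ξ : Set (ℤ × ℤ)) : Set (ℤ × ℤ) :=
  ξ ∪ {x | x ∈ caBox n ∧ (((nbrH ρ x).filter fun y => y ∈ ξ).card,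
            ((nbrV ρ x).filter fun y => y ∈ ξ).card) ∉ Z}

private lemma countH_lb (ρ : ℕ) (x : ℤ × ℤ) (ξ : Set (ℤ × ℤ)) (lo hi : ℤ)
    (h1 : x.1 - (ρ : ℤ) ≤ lo) (h2 : hi ≤ x.1 + (ρ : ℤ))
    (hocc : ∀ i : ℤ, lo ≤ i → i ≤ hi → (i, x.2) ∈ ξ) :
    (hi + 1 - lo).toNat ≤ ((nbrH ρ x).filter fun y => y ∈ ξ).card := by
  have hsub : (Finset.Icc lo hi).image (fun i => ((i, x.2) : ℤ × ℤ)) ⊆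
      (nbrH ρ x).filter fun y => y ∈ ξ := by
    intro y hy
    simp only [Finset.mem_image, Finset.mem_Icc] at hy
    obtain ⟨i, ⟨hi1, hi2⟩, rfl⟩ := hy
    refine Finset.mem_filter.2 ⟨?_, hocc i hi1 hi2⟩
    simp only [nbrH, Finset.mem_image, Finset.mem_Icc]
    exact ⟨i - x.1, ⟨by omega, by omega⟩, by simp⟩
  calc (hi + 1 - lo).toNat = (Finset.Icc lo hi).card := (Int.card_Icc lo hi).symm
    _ = ((Finset.Icc lo hi).image (fun i => ((i, x.2) : ℤ × ℤ))).card := by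
        rw [Finset.card_image_of_injective _ (fun a b h => (Prod.ext_iff.mp h).1)]
    _ ≤ _ := Finset.card_le_card hsub

private lemma countV_lb (ρ : ℕ) (x : ℤ × ℤ) (ξ : Set (ℤ × ℤ)) (lo hi : ℤ)
    (h1 : x.2 - (ρ : ℤ) ≤ lo) (h2 : hi ≤ x.2 + (ρ : ℤ))
    (hocc : ∀ i : ℤ, lo ≤ i → i ≤ hi → (x.1, i) ∈ ξ) :
    (hi + 1 - lo).toNat ≤ ((nbrV ρ x).filter fun y => y ∈ ξ).card := by
  have hsub : (Finset.Icc lo hi).image (fun i => ((x.1, i) : ℤ × ℤ)) ⊆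
      (nbrV ρ x).filter fun y => y ∈ ξ := by
    intro y hy
    simp only [Finset.mem_image, Finset.mem_Icc] at hy
    obtain ⟨i, ⟨hi1, hi2⟩, rfl⟩ := hy
    refine Finset.mem_filter.2 ⟨?_, hocc i hi1 hi2⟩
    simp only [nbrV, Finset.mem_image, Finset.mem_Icc]
    exact ⟨i - x.2, ⟨by omega, by omega⟩, by simp⟩
  calc (hi + 1 - lo).toNat = (Finset.Icc lo hi).card := (Int.card_Icc lo hi).symm
    _ = ((Finset.Icc lo hi).image (fun i => ((x.1, i) : ℤ × ℤ))).card := by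
        rw [Finset.card_image_of_injective _ (fun a b h => (Prod.ext_iff.mp h).2)]
    _ ≤ _ := Finset.card_le_card hsub

private lemma mem_step_of_counts (r ρ n : ℕ) (ξ : Set (ℤ × ℤ)) (x : ℤ × ℤ)
    (hx : x ∈ caBox n)
    (h : r ≤ ((nbrH ρ x).filter fun y => y ∈ ξ).card +
         ((nbrV ρ x).filter fun y => y ∈ ξ).card) :
    x ∈ caStepBox {q : ℕ × ℕ | q.1 + q.2 < r} ρ n ξ :=
  Set.mem_union_right _ ⟨hx, by simp only [Set.mem_setOf_eq]; omega⟩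

/-- Packed strips span for bootstrap percolation with threshold `r` (zero-set
`{(u,v) : u + v ≤ r − 1}`) on `B_n` with range `ρ ≥ r`: if some strip of `r`
consecutive rows is packed (row `j` from the bottom containing a contiguous
interval of `r−j` occupied sites, all intervals within horizontal distance `ρ`
of each other), then `B_n` is entirely occupied in at most `(r+1)n` steps. -/
theorem stmt13 (r ρ n : ℕ) (hr : 1 ≤ r) (hρ : r ≤ ρ) (hn : r ≤ n)
    (ξ0 : Set (ℤ × ℤ)) (hsub : ξ0 ⊆ caBox n)
    (y0 : ℤ) (a : ℕ → ℤ)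
    (hy0 : 0 ≤ y0 ∧ y0 + (r : ℤ) ≤ (n : ℤ))
    (ha : ∀ j : ℕ, j < r → 0 ≤ a j ∧ a j + ((r : ℤ) - (j : ℤ)) ≤ (n : ℤ) ∧
      ∀ i : ℤ, a j ≤ i → i < a j + ((r : ℤ) - (j : ℤ)) → (i, y0 + (j : ℤ)) ∈ ξ0)
    (hdist : ∀ j j' : ℕ, j < r → j' < r → |a j - a j'| ≤ (ρ : ℤ)) :
    (caStepBox {q : ℕ × ℕ | q.1 + q.2 < r} ρ n)^[(r + 1) * n] ξ0 = caBox n := by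
  have hy01 := hy0.1
  have hy02 := hy0.2
  set S : Set (ℤ × ℤ) → Set (ℤ × ℤ) :=
    caStepBox {q : ℕ × ℕ | q.1 + q.2 < r} ρ n with hSdef
  have hsub_step : ∀ ξ : Set (ℤ × ℤ), ξ ⊆ S ξ := fun ξ => Set.subset_union_left
  have hmono_t : ∀ t k : ℕ, S^[t] ξ0 ⊆ S^[t + k] ξ0 := by
    intro t k
    induction k with
    | zero => exact fun x hx => hx
    | succ k ih =>
      have : S^[t + (k + 1)] ξ0 = S (S^[t + k] ξ0) := by
        rw [show t + (k + 1) = (t + k) + 1 by omega, Function.iterate_succ_apply']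
      rw [this]
      exact ih.trans (hsub_step _)
  have hmono : ∀ {t t' : ℕ}, t ≤ t' → S^[t] ξ0 ⊆ S^[t'] ξ0 := by
    intro t t' h
    obtain ⟨k, rfl⟩ := Nat.exists_eq_add_of_le h
    exact hmono_t t k
  have hbox : ∀ t : ℕ, S^[t] ξ0 ⊆ caBox n := by
    intro t
    induction t with
    | zero => exact hsub
    | succ t ih =>
      rw [Function.iterate_succ_apply']
      intro x hx
      rcases hx with hx | hx
      · exact ih hx
      · exact hx.1
  -- Phase 1: rows of the strip fill one by one.
  have claim1 : ∀ j : ℕ, j ≤ r → ∀ j' : ℕ, j' < j → ∀ i : ℤ, 0 ≤ i → i < (n : ℤ) →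
      (i, y0 + (j' : ℤ)) ∈ S^[j * n] ξ0 := by
    intro j
    induction j with
    | zero => intro _ j' hj'; exact absurd hj' (Nat.not_lt_zero _)
    | succ j ih =>
      intro hjr j' hj' i hi0 hin
      have hjr' : j ≤ r := by omega
      have hjlt : j < r := by omega
      have haj := ha j hjlt
      -- row j fills horizontally
      have hrow : ∀ t : ℕ, ∀ i : ℤ, 0 ≤ i → i < (n : ℤ) → a j - t ≤ i →
          i < a j + ((r : ℤ) - (j : ℤ)) + t → (i, y0 + (j : ℤ)) ∈ S^[j * n + t] ξ0 := by
        intro t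
        induction t with
        | zero =>
          intro i h0 h1 h2 h3
          have hmem : (i, y0 + (j : ℤ)) ∈ ξ0 := haj.2.2 i (by omega) (by omega)
          have : (i, y0 + (j : ℤ)) ∈ S^[0] ξ0 := by simpa using hmem
          exact hmono (Nat.zero_le _) this
        | succ t iht =>
          intro i h0 h1 h2 h3
          rw [show j * n + (t + 1) = (j * n + t) + 1 by omega,
            Function.iterate_succ_apply']
          by_cases hc : a j - t ≤ i ∧ i < a j + ((r : ℤ) - (j : ℤ)) + t
          · exact hsub_step _ (iht i h0 h1 hc.1 hc.2)
          · push_neg at hc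
            have hxbox : ((i, y0 + (j : ℤ)) : ℤ × ℤ) ∈ caBox n := by
              refine ⟨h0, h1, by omega, by omega⟩
            -- vertical count ≥ j
            have hV : (y0 + (j : ℤ) - 1 + 1 - y0).toNat ≤
                ((nbrV ρ ((i, y0 + (j : ℤ)) : ℤ × ℤ)).filter
                  fun y => y ∈ S^[j * n + t] ξ0).card := by
              apply countV_lb
              · show (y0 + (j : ℤ)) - (ρ : ℤ) ≤ y0
                omega
              · show y0 + (j : ℤ) - 1 ≤ (y0 + (j : ℤ)) + (ρ : ℤ)
                omega
              · intro w hw1 hw2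
                have hj2 : ∃ j2 : ℕ, j2 < j ∧ (j2 : ℤ) = w - y0 :=
                  ⟨(w - y0).toNat, by omega, by omega⟩
                obtain ⟨j2, hj21, hj22⟩ := hj2
                have := ih hjr' j2 hj21 i h0 h1
                have hxx : ((i, y0 + (j2 : ℤ)) : ℤ × ℤ) = (i, w) := by
                  rw [Prod.ext_iff]; constructor <;> simp <;> omega
                rw [hxx] at this
                exact hmono (by omega) this
            -- horizontal count ≥ r - j, from one of the two boundary cases
            have hH : (((r : ℤ) - (j : ℤ))).toNat ≤
                ((nbrH ρ ((i, y0 + (j : ℤ)) : ℤ × ℤ)).filter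
                  fun y => y ∈ S^[j * n + t] ξ0).card := by
              have hcase : i = a j - (t : ℤ) - 1 ∨ i = a j + ((r : ℤ) - (j : ℤ)) + t := by
                omega
              rcases hcase with hcase | hcase
              · have := countH_lb ρ ((i, y0 + (j : ℤ)) : ℤ × ℤ) (S^[j * n + t] ξ0)
                  (i + 1) (i + ((r : ℤ) - (j : ℤ)))
                  (by show i - (ρ : ℤ) ≤ i + 1; omega)
                  (by show i + ((r : ℤ) - (j : ℤ)) ≤ i + (ρ : ℤ); omega)
                  (fun k hk1 hk2 => iht k (by omega) (by omega) (by omega) (by omega))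
                calc ((r : ℤ) - (j : ℤ)).toNat
                    = (i + ((r : ℤ) - (j : ℤ)) + 1 - (i + 1)).toNat := by omega
                  _ ≤ _ := this
              · have := countH_lb ρ ((i, y0 + (j : ℤ)) : ℤ × ℤ) (S^[j * n + t] ξ0)
                  (i - ((r : ℤ) - (j : ℤ))) (i - 1)
                  (by show i - (ρ : ℤ) ≤ i - ((r : ℤ) - (j : ℤ)); omega)
                  (by show i - 1 ≤ i + (ρ : ℤ); omega)
                  (fun k hk1 hk2 => iht k (by omega) (by omega) (by omega) (by omega))
                calc ((r : ℤ) - (j : ℤ)).toNat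
                    = (i - 1 + 1 - (i - ((r : ℤ) - (j : ℤ)))).toNat := by omega
                  _ ≤ _ := this
            exact mem_step_of_counts r ρ n _ _ hxbox (by omega)
      rcases Nat.lt_or_ge j' j with h | h
      · exact hmono (by nlinarith [Nat.le_of_lt hj']) (ih hjr' j' h i hi0 hin)
      · have hj'j : j' = j := by omega
        rw [hj'j]
        have := hrow n i hi0 hin (by omega) (by omega)
        have heq : j * n + n = (j + 1) * n := by ring
        rw [heq] at this
        exact this
  -- Phase 2: full rows grow vertically.
  have claim2 : ∀ t : ℕ, ∀ x : ℤ × ℤ, x ∈ caBox n → y0 - t ≤ x.2 →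
      x.2 < y0 + (r : ℤ) + t → x ∈ S^[r * n + t] ξ0 := by
    intro t
    induction t with
    | zero =>
      intro x hx h2 h3
      obtain ⟨hx1, hx2, hx3, hx4⟩ := hx
      have hj : ∃ j' : ℕ, j' < r ∧ (j' : ℤ) = x.2 - y0 :=
        ⟨(x.2 - y0).toNat, by omega, by omega⟩
      obtain ⟨j', hj1, hj2⟩ := hj
      have := claim1 r le_rfl j' hj1 x.1 hx1 hx2
      have hxx : ((x.1, y0 + (j' : ℤ)) : ℤ × ℤ) = x := by
        rw [Prod.ext_iff]; constructor <;> simp <;> omega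
      rw [hxx] at this
      simpa using this
    | succ t iht =>
      intro x hx h2 h3
      obtain ⟨hx1, hx2, hx3, hx4⟩ := hx
      rw [show r * n + (t + 1) = (r * n + t) + 1 by omega, Function.iterate_succ_apply']
      by_cases hc : y0 - t ≤ x.2 ∧ x.2 < y0 + (r : ℤ) + t
      · exact hsub_step _ (iht x ⟨hx1, hx2, hx3, hx4⟩ hc.1 hc.2)
      · push_neg at hc
        have hcase : x.2 = y0 - t - 1 ∨ x.2 = y0 + (r : ℤ) + t := by omega
        have hV : ((r : ℤ)).toNat ≤
            ((nbrV ρ x).filter fun y => y ∈ S^[r * n + t] ξ0).card := by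
          rcases hcase with hcase | hcase
          · have := countV_lb ρ x (S^[r * n + t] ξ0) (x.2 + 1) (x.2 + (r : ℤ))
              (by omega) (by omega)
              (fun w hw1 hw2 => iht (x.1, w)
                ⟨hx1, hx2, by omega, by omega⟩ (by omega) (by omega))
            calc ((r : ℤ)).toNat = (x.2 + (r : ℤ) + 1 - (x.2 + 1)).toNat := by omega
              _ ≤ _ := this
          · have := countV_lb ρ x (S^[r * n + t] ξ0) (x.2 - (r : ℤ)) (x.2 - 1)
              (by omega) (by omega)
              (fun w hw1 hw2 => iht (x.1, w)
                ⟨hx1, hx2, by omega, by omega⟩ (by omega) (by omega))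
            calc ((r : ℤ)).toNat = (x.2 - 1 + 1 - (x.2 - (r : ℤ))).toNat := by omega
              _ ≤ _ := this
        exact mem_step_of_counts r ρ n _ _ ⟨hx1, hx2, hx3, hx4⟩ (by omega)
  apply Set.Subset.antisymm
  · exact hbox _
  · intro x hx
    obtain ⟨hx1, hx2, hx3, hx4⟩ := hx
    have := claim2 n x ⟨hx1, hx2, hx3, hx4⟩ (by omega) (by omega)
    have heq : r * n + n = (r + 1) * n := by ring
    rw [heq] at this
    exact this
end

section
/- For bootstrap percolation with threshold r ≥ 2 on B_n with p-random initial occupation, if n ≫ p^{−γ} with γ = (m̂+1)(2r−m̂)/(2(m̂+2)) and m̂ = ⌈(√(9+8r)−5)/2⌉, then the probability that B_n contains a packed strip of r consecutive rows tends to 1 as p → 0. -/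
open MeasureTheory

/-- Bernoulli(p) measure on `Bool`. -/
noncomputable def bernMeasure (p : ℝ) : Measure Bool :=
  (PMF.bernoulli (min (Real.toNNReal p) 1) (min_le_right _ _)).toMeasure

/-- Product Bernoulli(p) measure on configurations of the `m × m` box. -/
noncomputable def siteMeasure (m : ℕ) (p : ℝ) : Measure (Fin m × Fin m → Bool) :=
  Measure.pi fun _ => bernMeasure p

/-- A configuration of `B_m` contains a packed strip of `r` consecutive rows:
row `j` from the bottom (`j = 0,…,r−1`) contains a contiguous run of `r − j`
occupied sites. -/
def HasPackedStrip (r m : ℕ) (ω : Fin m × Fin m → Bool) : Prop :=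
  ∃ y0 : ℕ, y0 + r ≤ m ∧ ∀ j : ℕ, j < r → ∃ a : ℕ, a + (r - j) ≤ m ∧
    ∀ q : Fin m × Fin m, a ≤ (q.1 : ℕ) → (q.1 : ℕ) < a + (r - j) →
      (q.2 : ℕ) = y0 + j → ω q = true

section Engine


variable {ι : Type*} [Fintype ι]

lemma measurableSet_all {κ : Type*} [Finite κ] (S : Set (κ → Bool)) : MeasurableSet S := by
  have h1 : ∀ f : κ → Bool, MeasurableSet ({f} : Set (κ → Bool)) := by
    intro f
    have : ({f} : Set (κ → Bool)) = ⋂ i, (fun g : κ → Bool => g i) ⁻¹' {f i} := by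
      ext g; simp [funext_iff, Set.mem_iInter, eq_comm]
    rw [this]
    exact MeasurableSet.iInter fun i => (measurable_pi_apply i) (measurableSet_singleton _)
  have : S = ⋃ f ∈ S, ({f} : Set (κ → Bool)) := by simp
  rw [this]
  exact MeasurableSet.biUnion S.to_countable fun f _ => h1 f

/-- `A` depends only on coordinates in `T`. -/
def DepOn (A : Set (ι → Bool)) (T : Set ι) : Prop :=
  ∀ ω ω' : ι → Bool, (∀ i ∈ T, ω i = ω' i) → (ω ∈ A ↔ ω' ∈ A)

lemma DepOn.mono {A : Set (ι → Bool)} {T T' : Set ι} (h : DepOn A T) (hT : T ⊆ T') :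
    DepOn A T' := fun ω ω' hagree => h ω ω' fun i hi => hagree i (hT hi)

lemma measure_inter_eq_mul (ν : ι → Measure Bool) [∀ i, IsProbabilityMeasure (ν i)]
    (T : Set ι) (A B : Set (ι → Bool)) (hA : DepOn A T) (hB : DepOn B Tᶜ) :
    Measure.pi ν (A ∩ B) = Measure.pi ν A * Measure.pi ν B := by
  classical
  set e := MeasurableEquiv.piEquivPiSubtypeProd (fun _ : ι => Bool) (· ∈ T) with he
  have hmp := measurePreserving_piEquivPiSubtypeProd (fun i : ι => ν i) (· ∈ T)
  set A' : Set (∀ i : {x : ι // x ∈ T}, Bool) := (fun ω (i : {x : ι // x ∈ T}) => ω i.1) '' A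
    with hA'
  set B' : Set (∀ i : {x : ι // ¬ x ∈ T}, Bool) := (fun ω (i : {x : ι // ¬ x ∈ T}) => ω i.1) '' B
    with hB'
  have hAeq : A = e ⁻¹' (A' ×ˢ Set.univ) := by
    ext ω
    constructor
    · intro h
      exact ⟨⟨ω, h, rfl⟩, Set.mem_univ _⟩
    · rintro ⟨⟨σ, hσ, hres⟩, -⟩
      exact (hA σ ω (fun i hi => congrFun hres ⟨i, hi⟩)).1 hσ
  have hBeq : B = e ⁻¹' (Set.univ ×ˢ B') := by
    ext ω
    constructor
    · intro h
      exact ⟨Set.mem_univ _, ⟨ω, h, rfl⟩⟩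
    · rintro ⟨-, ⟨σ, hσ, hres⟩⟩
      exact (hB σ ω (fun i hi => congrFun hres ⟨i, hi⟩)).1 hσ
  have hprod := fun (S₁ : Set (∀ i : {x : ι // x ∈ T}, Bool))
      (S₂ : Set (∀ i : {x : ι // ¬ x ∈ T}, Bool)) =>
    hmp.measure_preimage_equiv (S₁ ×ˢ S₂)
  have h1 : Measure.pi ν (A ∩ B) =
      ((Measure.pi fun i : {x : ι // x ∈ T} => ν i).prod
        (Measure.pi fun i : {x : ι // ¬ x ∈ T} => ν i)) (A' ×ˢ B') := by
    rw [hAeq, hBeq, ← Set.preimage_inter, Set.prod_inter_prod, Set.inter_univ, Set.univ_inter]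
    exact hprod A' B'
  have h2 : Measure.pi ν A =
      ((Measure.pi fun i : {x : ι // x ∈ T} => ν i).prod
        (Measure.pi fun i : {x : ι // ¬ x ∈ T} => ν i)) (A' ×ˢ Set.univ) := by
    rw [hAeq]; exact hprod A' Set.univ
  have h3 : Measure.pi ν B =
      ((Measure.pi fun i : {x : ι // x ∈ T} => ν i).prod
        (Measure.pi fun i : {x : ι // ¬ x ∈ T} => ν i)) (Set.univ ×ˢ B') := by
    rw [hBeq]; exact hprod Set.univ B'
  rw [h1, h2, h3, Measure.prod_prod, Measure.prod_prod, Measure.prod_prod]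
  simp [measure_univ]

lemma measure_iInter_eq_prod (ν : ι → Measure Bool) [∀ i, IsProbabilityMeasure (ν i)]
    {κ : Type*} (s : Finset κ) (T : κ → Set ι)
    (hdisj : ∀ a ∈ s, ∀ b ∈ s, a ≠ b → Disjoint (T a) (T b))
    (A : κ → Set (ι → Bool)) (hdep : ∀ k ∈ s, DepOn (A k) (T k)) :
    Measure.pi ν (⋂ k ∈ s, A k) = ∏ k ∈ s, Measure.pi ν (A k) := by
  classical
  induction s using Finset.induction_on with
  | empty => simp
  | @insert a s ha ih =>
    have hins : (⋂ k ∈ insert a s, A k) = A a ∩ ⋂ k ∈ s, A k := by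
      simp [Set.biInter_insert]
    rw [hins, Finset.prod_insert ha]
    have hdepRest : DepOn (⋂ k ∈ s, A k) (T a)ᶜ := by
      intro ω ω' hagree
      have : ∀ k ∈ s, (ω ∈ A k ↔ ω' ∈ A k) := by
        intro k hk
        refine hdep k (Finset.mem_insert_of_mem hk) ω ω' fun i hi => hagree i ?_
        have hd : Disjoint (T k) (T a) :=
          hdisj k (Finset.mem_insert_of_mem hk) a (Finset.mem_insert_self a s)
            (fun h => ha (h ▸ hk))
        exact (Set.disjoint_left.mp hd) hi
      simp only [Set.mem_iInter]
      exact ⟨fun h k hk => (this k hk).1 (h k hk), fun h k hk => (this k hk).2 (h k hk)⟩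
    rw [measure_inter_eq_mul ν (T a) _ _ (hdep a (Finset.mem_insert_self a s)) hdepRest]
    rw [ih (fun x hx y hy hxy => hdisj x (Finset.mem_insert_of_mem hx) y
      (Finset.mem_insert_of_mem hy) hxy) (fun k hk => hdep k (Finset.mem_insert_of_mem hk))]

lemma measure_cylinder (ν : ι → Measure Bool) [∀ i, IsProbabilityMeasure (ν i)]
    (T : Finset ι) :
    Measure.pi ν {ω : ι → Bool | ∀ i ∈ T, ω i = true} = ∏ i ∈ T, ν i {true} := by
  classical
  have hset : {ω : ι → Bool | ∀ i ∈ T, ω i = true} =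
      Set.pi Set.univ (fun i => if i ∈ T then ({true} : Set Bool) else Set.univ) := by
    ext ω
    simp only [Set.mem_setOf_eq, Set.mem_pi, Set.mem_univ, forall_true_left]
    constructor
    · intro h i
      by_cases hi : i ∈ T
      · simp [hi, h i hi]
      · simp [hi]
    · intro h i hi
      have := h i
      rw [if_pos hi] at this
      simpa using this
  rw [hset, Measure.pi_pi]
  rw [Finset.prod_congr rfl (fun i _ => show ν i (if i ∈ T then ({true} : Set Bool) else Set.univ)
      = if i ∈ T then ν i {true} else 1 by
        split
        · rfl
        · exact measure_univ)]
  rw [Finset.prod_ite_mem, Finset.univ_inter]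


end Engine

instance bernProb (p : ℝ) : IsProbabilityMeasure (bernMeasure p) :=
  PMF.toMeasure.isProbabilityMeasure _

instance siteProb (m : ℕ) (p : ℝ) : IsProbabilityMeasure (siteMeasure m p) := by
  unfold siteMeasure; infer_instance

lemma bern_true {p : ℝ} (h1 : p ≤ 1) : bernMeasure p {true} = ENNReal.ofReal p := by
  rw [bernMeasure, PMF.toMeasure_apply_singleton _ _ (measurableSet_singleton _)]
  rw [PMF.bernoulli_apply]
  have hmin : min (Real.toNNReal p) 1 = Real.toNNReal p := min_eq_left (Real.toNNReal_le_one.mpr h1)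
  simp [hmin, ENNReal.ofReal]

section Events

def blockSet (m y a len : ℕ) : Set (Fin m × Fin m → Bool) :=
  {ω | ∀ q : Fin m × Fin m, a ≤ (q.1 : ℕ) → (q.1 : ℕ) < a + len → (q.2 : ℕ) = y → ω q = true}

def rowSet (m y len M : ℕ) : Set (Fin m × Fin m → Bool) :=
  {ω | ∃ b, b < M ∧ ω ∈ blockSet m y (b * len) len}

def stripSet (m r i : ℕ) : Set (Fin m × Fin m → Bool) :=
  {ω | ∀ j, j < r → ω ∈ rowSet m (i * r + j) (r - j) (m / (r - j))}

lemma depOn_blockSet (m y a len : ℕ) :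
    DepOn (blockSet m y a len) {q : Fin m × Fin m | (q.2 : ℕ) = y} := by
  intro ω ω' hag
  constructor <;> intro h q h1 h2 h3
  · rw [← hag q h3]; exact h q h1 h2 h3
  · rw [hag q h3]; exact h q h1 h2 h3

lemma depOn_rowSet (m y len M : ℕ) :
    DepOn (rowSet m y len M) {q : Fin m × Fin m | (q.2 : ℕ) = y} := by
  intro ω ω' hag
  simp only [rowSet, Set.mem_setOf_eq]
  constructor <;> rintro ⟨b, hb, hbl⟩ <;> exact ⟨b, hb, by
    first
      | exact (depOn_blockSet m y (b*len) len ω ω' hag).1 hbl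
      | exact (depOn_blockSet m y (b*len) len ω ω' hag).2 hbl⟩

lemma depOn_stripSet (m r i : ℕ) :
    DepOn (stripSet m r i) {q : Fin m × Fin m | i * r ≤ (q.2 : ℕ) ∧ (q.2 : ℕ) < i * r + r} := by
  intro ω ω' hag
  simp only [stripSet, Set.mem_setOf_eq]
  have hrow : ∀ j, j < r → (∀ q : Fin m × Fin m, (q.2 : ℕ) = i * r + j → ω q = ω' q) := by
    intro j hj q hq
    exact hag q ⟨by omega, by omega⟩
  constructor <;> intro h j hj
  · exact (depOn_rowSet m (i*r+j) (r-j) (m/(r-j)) ω ω' (fun q hq => hrow j hj q hq)).1 (h j hj)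
  · exact (depOn_rowSet m (i*r+j) (r-j) (m/(r-j)) ω ω' (fun q hq => hrow j hj q hq)).2 (h j hj)

lemma measure_blockSet (m y a len : ℕ) (p : ℝ) (hp0 : 0 ≤ p) (hp1 : p ≤ 1)
    (hy : y < m) (halen : a + len ≤ m) :
    siteMeasure m p (blockSet m y a len) = ENNReal.ofReal (p ^ len) := by
  classical
  set T : Finset (Fin m × Fin m) :=
    Finset.univ.filter (fun q => a ≤ (q.1 : ℕ) ∧ (q.1 : ℕ) < a + len ∧ (q.2 : ℕ) = y) with hT
  have hset : blockSet m y a len = {ω : Fin m × Fin m → Bool | ∀ i ∈ T, ω i = true} := by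
    ext ω
    simp only [blockSet, Set.mem_setOf_eq, hT, Finset.mem_filter, Finset.mem_univ, true_and]
    constructor
    · rintro h q ⟨h1, h2, h3⟩; exact h q h1 h2 h3
    · intro h q h1 h2 h3; exact h q ⟨h1, h2, h3⟩
  have hcard : T.card = len := by
    rw [show len = (Finset.range len).card from (Finset.card_range len).symm]
    refine Finset.card_bij' (fun q _ => (q.1 : ℕ) - a)
        (fun t ht => ((⟨a + t, by have := Finset.mem_range.mp ht; omega⟩ : Fin m),
          (⟨y, hy⟩ : Fin m))) ?_ ?_ ?_ ?_
    · intro q hq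
      simp only [hT, Finset.mem_filter, Finset.mem_univ, true_and] at hq
      simp only [Finset.mem_range]; omega
    · intro t ht
      have h := Finset.mem_range.mp ht
      simp only [hT, Finset.mem_filter, Finset.mem_univ, true_and]
      refine ⟨by simp, by simp; omega, by simp⟩
    · intro q hq
      simp only [hT, Finset.mem_filter, Finset.mem_univ, true_and] at hq
      ext
      · simp; omega
      · simp [hq.2.2]
    · intro t ht
      have h := Finset.mem_range.mp ht
      simp
  rw [hset, siteMeasure, measure_cylinder, Finset.prod_congr rfl
    (fun i _ => bern_true hp1), Finset.prod_const, hcard, ← ENNReal.ofReal_pow hp0]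

lemma measure_rowSet (m y len M : ℕ) (p : ℝ) (hp0 : 0 ≤ p) (hp1 : p ≤ 1)
    (hy : y < m) (hlen : 0 < len) (hM : M * len ≤ m) :
    siteMeasure m p (rowSet m y len M) = ENNReal.ofReal (1 - (1 - p ^ len) ^ M) := by
  classical
  have hple : p ^ len ≤ 1 := pow_le_one₀ hp0 hp1
  have hple0 : (0:ℝ) ≤ p ^ len := pow_nonneg hp0 len
  have hcompl : (rowSet m y len M)ᶜ = ⋂ b ∈ Finset.range M, (blockSet m y (b * len) len)ᶜ := by
    ext ω
    simp only [rowSet, Set.mem_compl_iff, Set.mem_setOf_eq, Set.mem_iInter, Finset.mem_range]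
    push_neg
    constructor
    · intro h b hb; exact h b hb
    · intro h b hb; exact h b hb
  have hblock : ∀ b, b < M →
      siteMeasure m p (blockSet m y (b * len) len) = ENNReal.ofReal (p ^ len) := by
    intro b hb
    apply measure_blockSet m y _ len p hp0 hp1 hy
    calc b * len + len = (b+1) * len := by ring
    _ ≤ M * len := Nat.mul_le_mul_right _ (by omega)
    _ ≤ m := hM
  have hmeasC : siteMeasure m p ((rowSet m y len M)ᶜ) =
      ENNReal.ofReal ((1 - p ^ len) ^ M) := by
    rw [hcompl, siteMeasure]
    rw [measure_iInter_eq_prod _ (Finset.range M)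
      (fun b => {q : Fin m × Fin m | b * len ≤ (q.1 : ℕ) ∧ (q.1 : ℕ) < b * len + len
          ∧ (q.2 : ℕ) = y})
      (by
        intro b hb b' hb' hne
        rw [Set.disjoint_left]
        rintro q ⟨h1, h2, h3⟩ ⟨h1', h2', h3'⟩
        rcases Nat.lt_or_ge b b' with h | h
        · have : b * len + len ≤ b' * len := by
            calc b * len + len = (b+1) * len := by ring
            _ ≤ b' * len := Nat.mul_le_mul_right _ h
          omega
        · have h' : b' < b := by omega
          have : b' * len + len ≤ b * len := by
            calc b' * len + len = (b'+1) * len := by ring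
            _ ≤ b * len := Nat.mul_le_mul_right _ h'
          omega)
      _
      (by
        intro b hb
        intro ω ω' hag
        have hd : DepOn (blockSet m y (b * len) len)
            {q : Fin m × Fin m | b * len ≤ (q.1 : ℕ) ∧ (q.1 : ℕ) < b * len + len
              ∧ (q.2 : ℕ) = y} := by
          intro σ σ' hag'
          constructor <;> intro h q h1 h2 h3
          · rw [← hag' q ⟨h1, h2, h3⟩]; exact h q h1 h2 h3
          · rw [hag' q ⟨h1, h2, h3⟩]; exact h q h1 h2 h3
        exact not_iff_not.mpr (hd ω ω' hag))]
    have : ∀ b ∈ Finset.range M,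
        Measure.pi (fun _ => bernMeasure p) ((blockSet m y (b * len) len)ᶜ) =
          ENNReal.ofReal (1 - p ^ len) := by
      intro b hb
      rw [measure_compl (measurableSet_all _) (measure_ne_top _ _)]
      have := hblock b (Finset.mem_range.mp hb)
      rw [siteMeasure] at this
      rw [this, measure_univ, ← ENNReal.ofReal_one, ← ENNReal.ofReal_sub _ hple0]
    rw [Finset.prod_congr rfl this, Finset.prod_const, Finset.card_range,
      ← ENNReal.ofReal_pow (by linarith)]
  have : siteMeasure m p (rowSet m y len M) = 1 - siteMeasure m p ((rowSet m y len M)ᶜ) := by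
    rw [measure_compl (measurableSet_all _) (measure_ne_top _ _), measure_univ]
    rw [ENNReal.sub_sub_cancel (by simp) (prob_le_one)]
  rw [this, hmeasC, ← ENNReal.ofReal_one, ← ENNReal.ofReal_sub _
    (pow_nonneg (by linarith) _)]

end Events
lemma measure_stripSet (m r i : ℕ) (p : ℝ) (hp0 : 0 ≤ p) (hp1 : p ≤ 1)
    (hi : (i + 1) * r ≤ m) :
    siteMeasure m p (stripSet m r i) =
      ENNReal.ofReal (∏ j ∈ Finset.range r, (1 - (1 - p ^ (r - j)) ^ (m / (r - j)))) := by
  classical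
  have hfac : ∀ j ∈ Finset.range r, (0:ℝ) ≤ 1 - (1 - p ^ (r - j)) ^ (m / (r - j)) := by
    intro j hj
    have h1 : (0:ℝ) ≤ 1 - p ^ (r - j) := by
      have := pow_le_one₀ hp0 hp1 (n := r - j); linarith
    have h2 : (1 - p ^ (r - j)) ^ (m / (r - j)) ≤ 1 :=
      pow_le_one₀ h1 (by have := pow_nonneg hp0 (r - j); linarith)
    linarith
  have hset : stripSet m r i = ⋂ j ∈ Finset.range r, rowSet m (i*r+j) (r-j) (m/(r-j)) := by
    ext ω
    simp only [stripSet, Set.mem_setOf_eq, Set.mem_iInter, Finset.mem_range]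
  rw [hset, siteMeasure, measure_iInter_eq_prod _ (Finset.range r)
    (fun j => {q : Fin m × Fin m | (q.2 : ℕ) = i * r + j})
    (by
      intro a ha b hb hne
      rw [Set.disjoint_left]
      rintro q h1 h2
      simp only [Set.mem_setOf_eq] at h1 h2
      omega)
    _
    (fun j _ => depOn_rowSet m (i*r+j) (r-j) (m/(r-j)))]
  rw [ENNReal.ofReal_prod_of_nonneg hfac]
  apply Finset.prod_congr rfl
  intro j hj
  have hj' := Finset.mem_range.mp hj
  have hy : i * r + j < m := by
    have : i * r + j < (i + 1) * r := by
      have : i * r + j < i * r + r := by omega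
      calc i * r + j < i * r + r := this
      _ = (i+1) * r := by ring
    omega
  have := measure_rowSet m (i*r+j) (r-j) (m/(r-j)) p hp0 hp1 hy (by omega)
    (Nat.div_mul_le_self m (r-j))
  rw [siteMeasure] at this
  exact this

lemma measure_compl_G (m r : ℕ) (hr : 0 < r) (p : ℝ) (hp0 : 0 ≤ p) (hp1 : p ≤ 1) :
    siteMeasure m p ((⋃ i ∈ Finset.range (m / r), stripSet m r i)ᶜ) =
      ENNReal.ofReal ((1 - ∏ j ∈ Finset.range r,
        (1 - (1 - p ^ (r - j)) ^ (m / (r - j)))) ^ (m / r)) := by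
  classical
  set Q : ℝ := ∏ j ∈ Finset.range r, (1 - (1 - p ^ (r - j)) ^ (m / (r - j))) with hQ
  have hfac : ∀ j ∈ Finset.range r, (0:ℝ) ≤ 1 - (1 - p ^ (r - j)) ^ (m / (r - j)) := by
    intro j hj
    have h1 : (0:ℝ) ≤ 1 - p ^ (r - j) := by
      have := pow_le_one₀ hp0 hp1 (n := r - j); linarith
    have h2 : (1 - p ^ (r - j)) ^ (m / (r - j)) ≤ 1 :=
      pow_le_one₀ h1 (by have := pow_nonneg hp0 (r - j); linarith)
    linarith
  have hQ0 : 0 ≤ Q := Finset.prod_nonneg hfac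
  have hQ1 : Q ≤ 1 := Finset.prod_le_one hfac (by
    intro j hj
    have h1 : (0:ℝ) ≤ (1 - p ^ (r - j)) ^ (m / (r - j)) := by
      apply pow_nonneg
      have := pow_le_one₀ hp0 hp1 (n := r - j); linarith
    linarith)
  have hcompl : (⋃ i ∈ Finset.range (m / r), stripSet m r i)ᶜ =
      ⋂ i ∈ Finset.range (m / r), (stripSet m r i)ᶜ := by
    simp [Set.compl_iUnion]
  rw [hcompl, siteMeasure, measure_iInter_eq_prod _ (Finset.range (m / r))
    (fun i => {q : Fin m × Fin m | i * r ≤ (q.2 : ℕ) ∧ (q.2 : ℕ) < i * r + r})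
    (by
      intro a ha b hb hne
      rw [Set.disjoint_left]
      rintro q ⟨h1, h2⟩ ⟨h1', h2'⟩
      rcases Nat.lt_or_ge a b with h | h
      · have : a * r + r ≤ b * r := by
          calc a * r + r = (a+1) * r := by ring
          _ ≤ b * r := Nat.mul_le_mul_right _ h
        omega
      · have h' : b < a := by omega
        have : b * r + r ≤ a * r := by
          calc b * r + r = (b+1) * r := by ring
          _ ≤ a * r := Nat.mul_le_mul_right _ h'
        omega)
    _
    (by
      intro i _
      intro ω ω' hag
      exact not_iff_not.mpr (depOn_stripSet m r i ω ω' hag))]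
  have hstrip : ∀ i ∈ Finset.range (m / r),
      Measure.pi (fun _ : Fin m × Fin m => bernMeasure p) ((stripSet m r i)ᶜ) =
        ENNReal.ofReal (1 - Q) := by
    intro i hi
    have hi' := Finset.mem_range.mp hi
    have hile : (i + 1) * r ≤ m := by
      calc (i + 1) * r ≤ (m / r) * r := Nat.mul_le_mul_right _ (by omega)
      _ ≤ m := Nat.div_mul_le_self m r
    rw [measure_compl (measurableSet_all _) (measure_ne_top _ _), measure_univ]
    have := measure_stripSet m r i p hp0 hp1 hile
    rw [siteMeasure] at this
    rw [this, ← hQ, ← ENNReal.ofReal_one, ← ENNReal.ofReal_sub _ hQ0]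
  rw [Finset.prod_congr rfl hstrip, Finset.prod_const, Finset.card_range,
    ← ENNReal.ofReal_pow (by linarith)]

lemma part1 (m r : ℕ) (hr : 0 < r) (p : ℝ) (hp0 : 0 ≤ p) (hp1 : p ≤ 1) :
    ENNReal.ofReal (1 - (1 - ∏ j ∈ Finset.range r,
        (1 - (1 - p ^ (r - j)) ^ (m / (r - j)))) ^ (m / r))
      ≤ siteMeasure m p {ω | HasPackedStrip r m ω} := by
  classical
  set G : Set (Fin m × Fin m → Bool) := ⋃ i ∈ Finset.range (m / r), stripSet m r i with hG
  have hsub : G ⊆ {ω | HasPackedStrip r m ω} := by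
    rintro ω hω
    simp only [hG, Set.mem_iUnion, Finset.mem_range] at hω
    obtain ⟨i, hi, hstrip⟩ := hω
    refine ⟨i * r, ?_, ?_⟩
    · calc i * r + r = (i+1) * r := by ring
      _ ≤ (m / r) * r := Nat.mul_le_mul_right _ (by omega)
      _ ≤ m := Nat.div_mul_le_self m r
    · intro j hj
      obtain ⟨b, hb, hbl⟩ := hstrip j hj
      refine ⟨b * (r - j), ?_, ?_⟩
      · calc b * (r - j) + (r - j) = (b+1) * (r - j) := by ring
        _ ≤ (m / (r - j)) * (r - j) := Nat.mul_le_mul_right _ (by omega)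
        _ ≤ m := Nat.div_mul_le_self m (r - j)
      · intro q h1 h2 h3
        exact hbl q h1 h2 h3
  have hfac : ∀ j ∈ Finset.range r, (0:ℝ) ≤ 1 - (1 - p ^ (r - j)) ^ (m / (r - j)) := by
    intro j hj
    have h1 : (0:ℝ) ≤ 1 - p ^ (r - j) := by
      have := pow_le_one₀ hp0 hp1 (n := r - j); linarith
    have h2 : (1 - p ^ (r - j)) ^ (m / (r - j)) ≤ 1 :=
      pow_le_one₀ h1 (by have := pow_nonneg hp0 (r - j); linarith)
    linarith
  have hQ1 : (∏ j ∈ Finset.range r, (1 - (1 - p ^ (r - j)) ^ (m / (r - j)))) ≤ 1 :=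
    Finset.prod_le_one hfac (by
      intro j hj
      have h1 : (0:ℝ) ≤ (1 - p ^ (r - j)) ^ (m / (r - j)) := by
        apply pow_nonneg
        have := pow_le_one₀ hp0 hp1 (n := r - j); linarith
      linarith)
  have hpow0 : (0:ℝ) ≤ (1 - ∏ j ∈ Finset.range r,
      (1 - (1 - p ^ (r - j)) ^ (m / (r - j)))) ^ (m / r) :=
    pow_nonneg (by linarith) _
  have hGm : ENNReal.ofReal (1 - (1 - ∏ j ∈ Finset.range r,
      (1 - (1 - p ^ (r - j)) ^ (m / (r - j)))) ^ (m / r)) ≤ siteMeasure m p G := by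
    have h1 : siteMeasure m p G = 1 - siteMeasure m p Gᶜ := by
      rw [measure_compl (measurableSet_all _) (measure_ne_top _ _), measure_univ]
      rw [ENNReal.sub_sub_cancel (by simp) (prob_le_one)]
    rw [h1, measure_compl_G m r hr p hp0 hp1, ← ENNReal.ofReal_one,
      ← ENNReal.ofReal_sub _ hpow0]
  exact le_trans hGm (measure_mono hsub)

open Filter Finset

noncomputable def gamAux (R t : ℝ) : ℝ := (t + 1) * (2 * R - t) / (2 * (t + 2))

lemma gamAux_step (R t : ℝ) (ht0 : 0 ≤ t) (hstep : (t + 1) * (t + 4) ≤ 2 * R) :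
    gamAux R t ≤ gamAux R (t + 1) := by
  unfold gamAux
  rw [div_le_div_iff₀ (by linarith) (by linarith)]
  nlinarith

set_option maxHeartbeats 1000000 in
lemma gamma_facts (r : ℕ) (hr : 2 ≤ r) (mhat : ℤ)
    (hmhat : mhat = ⌈(Real.sqrt (9 + 8 * (r : ℝ)) - 5) / 2⌉)
    (γ : ℝ) (hγ : γ = ((mhat : ℝ) + 1) * (2 * (r : ℝ) - (mhat : ℝ)) / (2 * ((mhat : ℝ) + 2))) :
    0 < γ ∧ ∀ k₀ : ℕ, 1 ≤ k₀ → k₀ ≤ r → γ < (k₀ : ℝ) →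
      ((∑ l ∈ Finset.Icc k₀ r, l : ℕ) : ℝ) ≤ γ * (((r - k₀ : ℕ) : ℝ) + 2) := by
  have hR2 : (2:ℝ) ≤ (r:ℝ) := by exact_mod_cast hr
  set R : ℝ := (r:ℝ) with hR
  set s : ℝ := Real.sqrt (9 + 8 * R) with hs
  set x : ℝ := (s - 5) / 2 with hx
  set M : ℝ := (mhat : ℝ) with hM
  have hs0 : 0 ≤ s := Real.sqrt_nonneg _
  have hs2 : s ^ 2 = 9 + 8 * R := Real.sq_sqrt (by nlinarith)
  have hs5 : 5 ≤ s := by nlinarith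
  have hx0 : 0 ≤ x := by rw [hx]; linarith
  have hx2r : (x + 1) * (x + 4) = 2 * R := by rw [hx]; nlinarith
  have hxm : x ≤ M := by rw [hM, hmhat]; exact_mod_cast Int.le_ceil _
  have hm1 : M < x + 1 := by rw [hM, hmhat]; exact_mod_cast Int.ceil_lt_add_one _
  have hM0 : 0 ≤ M := le_trans hx0 hxm
  have hMZ0 : (0:ℤ) ≤ mhat := by
    have := hM0; rw [hM] at this; exact_mod_cast this
  have hxr : x ≤ R - 1 := by rw [hx]; nlinarith
  have hMr : M < R := by linarith
  have hiii : 2 * R ≤ (M + 1) * (M + 4) := by nlinarith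
  have hden : (0:ℝ) < M + 2 := by linarith
  have hγ2 : 2 * (M + 2) * γ = (M + 1) * (2 * R - M) := by
    rw [hγ]; field_simp
  have hγpos : 0 < γ := by
    rw [hγ]
    apply div_pos (by nlinarith) (by linarith)
  have hv : R - M - 1 ≤ γ := by nlinarith
  refine ⟨hγpos, ?_⟩
  intro k₀ h1 h2 h3
  set mn : ℕ := mhat.toNat with hmn
  have hmnM : (mn : ℝ) = M := by
    rw [hmn, hM]
    exact_mod_cast congrArg Int.cast (Int.toNat_of_nonneg hMZ0)
  have hgM : gamAux R M = γ := by rw [gamAux, hγ]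
  have step : ∀ t : ℕ, (t : ℝ) ≤ M - 1 → gamAux R t ≤ gamAux R (t + 1) := by
    intro t ht
    have ht0 : (0:ℝ) ≤ (t:ℝ) := Nat.cast_nonneg t
    have htx : (t:ℝ) < x := by linarith
    exact gamAux_step R t ht0 (by nlinarith)
  have mono : ∀ d t : ℕ, t + d = mn → gamAux R t ≤ gamAux R mn := by
    intro d
    induction d with
    | zero => intro t ht; simp at ht; rw [ht]
    | succ d ih =>
      intro t ht
      have h1' : (t : ℝ) ≤ M - 1 := by
        have h7 : t + 1 ≤ mn := by omega
        have h8 := (Nat.cast_le (α := ℝ)).mpr h7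
        push_cast at h8
        rw [hmnM] at h8
        linarith
      calc gamAux R t ≤ gamAux R ((t:ℝ) + 1) := step t h1'
      _ = gamAux R ((t + 1 : ℕ) : ℝ) := by push_cast; ring_nf
      _ ≤ gamAux R mn := ih (t + 1) (by omega)
  set m' : ℕ := r - k₀ with hm'
  have hm'R : (m' : ℝ) = R - (k₀ : ℝ) := by
    rw [hm', hR]
    push_cast [Nat.cast_sub h2]
    ring
  have hm'M : m' ≤ mn := by
    have h4 : (m' : ℝ) < M + 1 := by
      rw [hm'R]; linarith
    have h5 : (m' : ℝ) < (mn : ℝ) + 1 := by rw [hmnM]; exact h4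
    have h6 : (m' : ℕ) < mn + 1 := by exact_mod_cast h5
    omega
  have hgm' : gamAux R m' ≤ γ := by
    rw [← hgM, ← hmnM]
    exact mono (mn - m') m' (by omega)
  have hIcc : Finset.Icc k₀ r = Finset.range (r+1) \ Finset.range k₀ := by
    ext l
    simp only [Finset.mem_Icc, Finset.mem_range, Finset.mem_sdiff]
    omega
  have hadd : (∑ l ∈ Finset.range (r+1) \ Finset.range k₀, l) + ∑ l ∈ Finset.range k₀, l
      = ∑ l ∈ Finset.range (r+1), l :=
    Finset.sum_sdiff (Finset.range_subset_range.mpr (by omega))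
  have hg1 : (∑ l ∈ Finset.range (r+1), l) * 2 = (r+1) * r := by
    rw [Finset.sum_range_id_mul_two]; simp
  have hg2 : (∑ l ∈ Finset.range k₀, l) * 2 = k₀ * (k₀ - 1) :=
    Finset.sum_range_id_mul_two k₀
  have c1 : ((∑ l ∈ Finset.Icc k₀ r, l : ℕ) : ℝ)
      = ((∑ l ∈ Finset.range (r+1), l : ℕ) : ℝ) - ((∑ l ∈ Finset.range k₀, l : ℕ) : ℝ) := by
    rw [hIcc, ← hadd]; push_cast; ring
  have c2 : ((∑ l ∈ Finset.range (r+1), l : ℕ) : ℝ) * 2 = (R+1) * R := by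
    rw [hR]; exact_mod_cast hg1
  have c3 : ((∑ l ∈ Finset.range k₀, l : ℕ) : ℝ) * 2 = (k₀:ℝ) * ((k₀:ℝ) - 1) := by
    have hg2' : (∑ l ∈ Finset.range k₀, l) * 2 + k₀ = k₀ * k₀ := by
      rw [hg2, Nat.mul_sub_one]
      have hk : k₀ ≤ k₀ * k₀ := Nat.le_mul_of_pos_left _ (by omega)
      omega
    have h9 : ((∑ l ∈ Finset.range k₀, l : ℕ) : ℝ) * 2 + (k₀:ℝ) = (k₀:ℝ) * (k₀:ℝ) := by
      exact_mod_cast hg2'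
    linarith
  have hS2 : ((∑ l ∈ Finset.Icc k₀ r, l : ℕ) : ℝ) * 2 = ((m' : ℝ) + 1) * (2 * R - m') := by
    rw [c1, hm'R]
    linear_combination c2 - c3
  have hm'0 : (0:ℝ) ≤ (m':ℝ) := Nat.cast_nonneg m'
  have hmul : gamAux R m' * (2 * ((m':ℝ) + 2)) ≤ γ * (2 * ((m':ℝ) + 2)) :=
    mul_le_mul_of_nonneg_right hgm' (by linarith)
  have hne : (2 * ((m':ℝ) + 2)) ≠ 0 := ne_of_gt (by linarith)
  have hgm'eq : gamAux R m' * (2 * ((m':ℝ) + 2)) = ((m' : ℝ) + 1) * (2 * R - m') := by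
    rw [gamAux]
    exact div_mul_cancel₀ _ hne
  linarith [hmul, hgm'eq, hS2]

lemma pow_one_sub_le (x : ℝ) (hx0 : 0 ≤ x) (hx1 : x ≤ 1) (M : ℕ) :
    (1 - x) ^ M ≤ 1 / (1 + M * x) := by
  have h1 : (0:ℝ) < 1 + M * x := by positivity
  have h2 : 1 + (M:ℝ) * x ≤ (1 + x) ^ M := by
    have := one_add_mul_le_pow (a := x) (by linarith) M
    linarith
  have h3 : (1 - x) ^ M * (1 + x) ^ M ≤ 1 := by
    rw [← mul_pow]
    calc ((1-x)*(1+x))^M ≤ 1^M := pow_le_pow_left₀ (by nlinarith) (by nlinarith) M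
    _ = 1 := one_pow M
  rw [le_div_iff₀ h1]
  calc (1-x)^M * (1 + M*x) ≤ (1-x)^M * (1+x)^M :=
    mul_le_mul_of_nonneg_left h2 (pow_nonneg (by linarith) M)
  _ ≤ 1 := h3

lemma run_lb (x : ℝ) (hx0 : 0 ≤ x) (hx1 : x ≤ 1) (M : ℕ) :
    min 1 ((M:ℝ) * x) / 2 ≤ 1 - (1 - x) ^ M := by
  have h1 : (0:ℝ) < 1 + M * x := by positivity
  have hp := pow_one_sub_le x hx0 hx1 M
  rcases le_total ((M:ℝ) * x) 1 with h | h
  · rw [min_eq_right h]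
    have h5 : 1 / (1 + (M:ℝ)*x) ≤ 1 - M*x/2 := by
      rw [div_le_iff₀ h1]
      nlinarith [mul_nonneg (Nat.cast_nonneg (α := ℝ) M) hx0]
    linarith
  · rw [min_eq_left h]
    have h5 : 1 / (1 + (M:ℝ)*x) ≤ 1/2 :=
      one_div_le_one_div_of_le (by linarith) (by linarith)
    linarith

lemma nat_div_cast_ge (nn len : ℕ) (hl : 0 < len) (h : 2 * len ≤ nn) :
    (nn:ℝ) / (2 * len) ≤ ((nn / len : ℕ) : ℝ) := by
  have hq1 : 1 ≤ nn / len := (Nat.one_le_div_iff hl).mpr (by omega)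
  have hmod := Nat.div_add_mod nn len
  have hmlt : nn % len < len := Nat.mod_lt _ hl
  have hmodR : (len:ℝ) * ((nn / len : ℕ) : ℝ) + ((nn % len : ℕ) : ℝ) = (nn:ℝ) := by
    exact_mod_cast hmod
  have hmltR : ((nn % len : ℕ) : ℝ) < (len:ℝ) := by exact_mod_cast hmlt
  have hq1R : (1:ℝ) ≤ ((nn / len : ℕ) : ℝ) := by exact_mod_cast hq1
  have hlR : (0:ℝ) < (len:ℝ) := by exact_mod_cast hl
  have hle : (len:ℝ) ≤ (len:ℝ) * ((nn / len : ℕ) : ℝ) := by nlinarith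
  rw [div_le_iff₀ (by positivity)]
  nlinarith

lemma NQ_atTop (r : ℕ) (hr : 2 ≤ r) (γ : ℝ) (hγpos : 0 < γ)
    (hkey : ∀ k₀ : ℕ, 1 ≤ k₀ → k₀ ≤ r → γ < (k₀ : ℝ) →
      ((∑ l ∈ Finset.Icc k₀ r, l : ℕ) : ℝ) ≤ γ * (((r - k₀ : ℕ) : ℝ) + 2))
    (p : ℕ → ℝ) (hp : ∀ k, 0 < p k ∧ p k < 1)
    (n : ℕ → ℕ)
    (hn : Tendsto (fun k => (n k : ℝ) * p k ^ γ) atTop atTop) :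
    Tendsto (fun k => ((n k / r : ℕ) : ℝ) *
      ∏ j ∈ Finset.range r, (1 - (1 - p k ^ (r - j)) ^ (n k / (r - j)))) atTop atTop := by
  have hrR : (2:ℝ) ≤ (r:ℝ) := by exact_mod_cast hr
  set c : ℕ → ℝ := fun k => (n k : ℝ) * p k ^ γ with hc
  have hnn : Tendsto (fun k => (n k : ℝ)) atTop atTop := by
    apply tendsto_atTop_mono _ hn
    intro k
    have h1 : p k ^ γ ≤ 1 :=
      Real.rpow_le_one (le_of_lt (hp k).1) (le_of_lt (hp k).2) (le_of_lt hγpos)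
    calc (n k : ℝ) * p k ^ γ ≤ (n k : ℝ) * 1 :=
      mul_le_mul_of_nonneg_left h1 (Nat.cast_nonneg _)
    _ = (n k : ℝ) := mul_one _
  have hA : (0:ℝ) < (2*r)^(r+1) := by positivity
  have hccdiv : Tendsto (fun k => c k * c k / (2*(r:ℝ))^(r+1)) atTop atTop :=
    (hn.atTop_mul_atTop₀ hn).atTop_div_const hA
  have hmin : Tendsto (fun k => min ((n k : ℝ)) (c k * c k / (2*(r:ℝ))^(r+1))) atTop atTop := by
    rw [tendsto_atTop]
    intro b
    filter_upwards [tendsto_atTop.1 hnn b, tendsto_atTop.1 hccdiv b] with k h1 h2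
    exact le_min h1 h2
  have hLatTop : Tendsto (fun k =>
      min ((n k : ℝ)) (c k * c k / (2*(r:ℝ))^(r+1)) / ((2*(r:ℝ)) * 2^r)) atTop atTop :=
    hmin.atTop_div_const (by positivity)
  apply tendsto_atTop_mono' _ _ hLatTop
  filter_upwards [tendsto_atTop.1 hnn (2*(r:ℝ)), tendsto_atTop.1 hn (max 1 (2*(r:ℝ)))]
    with k hkn hkc
  -- per-k bound
  set P : ℝ := p k with hP
  set nn : ℕ := n k with hnn'
  have hP0 : 0 < P := (hp k).1
  have hP1 : P < 1 := (hp k).2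
  have hc1 : (1:ℝ) ≤ c k := le_trans (le_max_left _ _) hkc
  have hc2r : 2*(r:ℝ) ≤ c k := le_trans (le_max_right _ _) hkc
  have hn2r : 2 * r ≤ nn := by
    have : (2*(r:ℝ)) ≤ (nn:ℝ) := hkn
    exact_mod_cast this
  have hnpos : 0 < nn := by omega
  -- Step 1: each row factor bound
  have hstep1 : ∀ j ∈ Finset.range r,
      min 1 ((nn:ℝ) * P^(r-j) / (2*r)) / 2 ≤ (1 - (1 - P ^ (r - j)) ^ (nn / (r - j))) := by
    intro j hj
    have hjr := Finset.mem_range.mp hj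
    set len : ℕ := r - j with hlen
    have hlen1 : 1 ≤ len := by omega
    have hlenr : len ≤ r := by omega
    have hx0 : (0:ℝ) ≤ P^len := by positivity
    have hx1 : P^len ≤ 1 := pow_le_one₀ (le_of_lt hP0) (le_of_lt hP1)
    have hrun := run_lb (P^len) hx0 hx1 (nn / len)
    have hM : (nn:ℝ) / (2*r) ≤ ((nn / len : ℕ) : ℝ) := by
      calc (nn:ℝ) / (2*r) ≤ (nn:ℝ) / (2*len) := by
            apply div_le_div_of_nonneg_left (Nat.cast_nonneg _) (by positivity)
            have : (len:ℝ) ≤ (r:ℝ) := by exact_mod_cast hlenr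
            linarith
      _ ≤ ((nn / len : ℕ) : ℝ) := nat_div_cast_ge nn len (by omega) (by omega)
    have hminle : min 1 ((nn:ℝ) * P^len / (2*r)) ≤ min 1 (((nn/len : ℕ):ℝ) * P^len) := by
      apply min_le_min (le_refl 1)
      have h9 := mul_le_mul_of_nonneg_right hM hx0
      calc (nn:ℝ) * P^len / (2*r) = ((nn:ℝ)/(2*r)) * P^len := by ring
      _ ≤ ((nn/len : ℕ):ℝ) * P^len := h9
    linarith
  -- Step 2: product bound
  set Q : ℝ := ∏ j ∈ Finset.range r, (1 - (1 - P ^ (r - j)) ^ (nn / (r - j))) with hQ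
  have hg0 : ∀ j ∈ Finset.range r, (0:ℝ) ≤ min 1 ((nn:ℝ) * P^(r-j) / (2*r)) / 2 := by
    intro j hj
    have : (0:ℝ) ≤ min 1 ((nn:ℝ) * P^(r-j) / (2*r)) := le_min (by norm_num) (by positivity)
    linarith
  have hQlb : (∏ j ∈ Finset.range r, (min 1 ((nn:ℝ) * P^(r-j) / (2*r)) / 2)) ≤ Q :=
    Finset.prod_le_prod hg0 hstep1
  have hQsplit : (∏ j ∈ Finset.range r, (min 1 ((nn:ℝ) * P^(r-j) / (2*r)) / 2))
      = (∏ j ∈ Finset.range r, min 1 ((nn:ℝ) * P^(r-j) / (2*r))) / 2^r := by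
    rw [Finset.prod_div_distrib, Finset.prod_const, Finset.card_range]
  -- Step 3: reindex
  have hreidx : (∏ j ∈ Finset.range r, min 1 ((nn:ℝ) * P^(r-j) / (2*r)))
      = ∏ l ∈ Finset.Icc 1 r, min 1 ((nn:ℝ) * P^l / (2*r)) := by
    apply Finset.prod_nbij' (fun j => r - j) (fun l => r - l)
    · intro a ha
      simp only [Finset.mem_range] at ha
      simp only [Finset.mem_Icc]
      omega
    · intro b hb
      simp only [Finset.mem_Icc] at hb
      simp only [Finset.mem_range]
      omega
    · intro a ha
      simp only [Finset.mem_range] at ha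
      omega
    · intro b hb
      simp only [Finset.mem_Icc] at hb
      omega
    · intro a ha
      rfl
  -- Step 4
  have hstep4 : min ((nn:ℝ)) (c k * c k / (2*(r:ℝ))^(r+1)) ≤
      (nn:ℝ) * ∏ l ∈ Finset.Icc 1 r, min 1 ((nn:ℝ) * P^l / (2*r)) := by
    classical
    set K : Finset ℕ := (Finset.Icc 1 r).filter (fun l => (nn:ℝ) * P^l / (2*r) < 1) with hK
    have hprodK : (∏ l ∈ Finset.Icc 1 r, min 1 ((nn:ℝ) * P^l / (2*r)))
        = ∏ l ∈ K, ((nn:ℝ) * P^l / (2*r)) := by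
      rw [← Finset.prod_filter_mul_prod_filter_not (Finset.Icc 1 r)
        (fun l => (nn:ℝ) * P^l / (2*r) < 1)]
      have h1 : ∏ l ∈ K, min 1 ((nn:ℝ) * P^l / (2*r)) = ∏ l ∈ K, ((nn:ℝ) * P^l / (2*r)) := by
        apply Finset.prod_congr rfl
        intro l hl
        rw [hK, Finset.mem_filter] at hl
        exact min_eq_right (le_of_lt hl.2)
      have h2 : ∏ l ∈ (Finset.Icc 1 r).filter (fun l => ¬ ((nn:ℝ) * P^l / (2*r) < 1)), 
          min 1 ((nn:ℝ) * P^l / (2*r)) = 1 := by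
        apply Finset.prod_eq_one
        intro l hl
        rw [Finset.mem_filter] at hl
        exact min_eq_left (not_lt.mp hl.2)
      rw [h1, h2, mul_one]
    rw [hprodK]
    rcases Finset.eq_empty_or_nonempty K with hKe | hKne
    · rw [hKe, Finset.prod_empty, mul_one]
      exact min_le_left _ _
    · set k₀ : ℕ := K.min' hKne with hk₀
      have hk₀K : k₀ ∈ K := K.min'_mem hKne
      have hk₀mem := hk₀K
      rw [hK, Finset.mem_filter, Finset.mem_Icc] at hk₀mem
      obtain ⟨⟨hk₀1, hk₀r⟩, hk₀lt⟩ := hk₀mem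
      have hγk₀ : γ < (k₀:ℝ) := by
        by_contra hcon
        push_neg at hcon
        have h5 : P ^ γ ≤ P ^ ((k₀:ℝ)) :=
          Real.rpow_le_rpow_of_exponent_ge hP0 (le_of_lt hP1) hcon
        rw [Real.rpow_natCast] at h5
        have h6 : (nn:ℝ) * P^k₀ < 2*r := by
          rw [div_lt_one (by positivity)] at hk₀lt
          exact hk₀lt
        have h7 : c k ≤ (nn:ℝ) * P^k₀ := by
          rw [hc]
          exact mul_le_mul_of_nonneg_left h5 (Nat.cast_nonneg _)
        linarith
      have hKIcc : K = Finset.Icc k₀ r := by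
        apply Finset.ext
        intro l
        constructor
        · intro hl
          have h8 := K.min'_le l hl
          rw [hK, Finset.mem_filter, Finset.mem_Icc] at hl
          rw [Finset.mem_Icc]
          exact ⟨h8, hl.1.2⟩
        · intro hl
          rw [Finset.mem_Icc] at hl
          rw [hK, Finset.mem_filter, Finset.mem_Icc]
          refine ⟨⟨by omega, hl.2⟩, ?_⟩
          rw [div_lt_one (by positivity)]
          rw [div_lt_one (by positivity)] at hk₀lt
          have h9 : P ^ l ≤ P ^ k₀ :=
            pow_le_pow_of_le_one (le_of_lt hP0) (le_of_lt hP1) hl.1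
          have h10 : (nn:ℝ) * P ^ l ≤ (nn:ℝ) * P ^ k₀ :=
            mul_le_mul_of_nonneg_left h9 (Nat.cast_nonneg _)
          linarith
      set m' : ℕ := r - k₀ with hm'
      have hcardK : K.card = m' + 1 := by
        rw [hKIcc, Nat.card_Icc]
        omega
      set S : ℕ := ∑ l ∈ Finset.Icc k₀ r, l with hS
      have hSkey : (S:ℝ) ≤ γ * ((m' : ℝ) + 2) := by
        have := hkey k₀ hk₀1 hk₀r hγk₀
        rw [hS, hm']
        exact this
      have hprodval : ∏ l ∈ K, ((nn:ℝ) * P^l / (2*r))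
          = (nn:ℝ)^(m'+1) * P^S / (2*(r:ℝ))^(m'+1) := by
        rw [Finset.prod_div_distrib, Finset.prod_mul_distrib, Finset.prod_const,
          Finset.prod_const, hcardK, Finset.prod_pow_eq_pow_sum, hKIcc, ← hS]
      rw [hprodval]
      have hPS : P ^ (γ * ((m':ℝ)+2)) ≤ P^S := by
        rw [show (P:ℝ)^S = P ^ ((S:ℝ)) from (Real.rpow_natCast P S).symm]
        exact Real.rpow_le_rpow_of_exponent_ge hP0 (le_of_lt hP1) hSkey
      have hck : c k ^ (m'+2) = (nn:ℝ)^(m'+2) * P ^ (γ * ((m'+2:ℕ):ℝ)) := by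
        rw [hc]
        rw [mul_pow]
        congr 1
        rw [← Real.rpow_natCast (P ^ γ) (m'+2), ← Real.rpow_mul (le_of_lt hP0)]
      have hchain : c k ^ (m'+2) / (2*(r:ℝ))^(m'+1)
          ≤ (nn:ℝ) * ((nn:ℝ)^(m'+1) * P^S / (2*(r:ℝ))^(m'+1)) := by
        rw [mul_div_assoc']
        apply div_le_div_of_nonneg_right _ (by positivity)
        · rw [hck]
          have hcast : ((m'+2:ℕ):ℝ) = (m':ℝ) + 2 := by push_cast; ring
          rw [hcast]
          calc (nn:ℝ)^(m'+2) * P ^ (γ * ((m':ℝ)+2))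
              ≤ (nn:ℝ)^(m'+2) * P^S := by
                apply mul_le_mul_of_nonneg_left hPS (by positivity)
          _ = (nn:ℝ) * ((nn:ℝ)^(m'+1) * P^S) := by ring
      have hfinal : c k * c k / (2*(r:ℝ))^(r+1) ≤ c k ^ (m'+2) / (2*(r:ℝ))^(m'+1) := by
        apply div_le_div₀ (by positivity)
        · calc c k * c k = c k ^ 2 := (sq (c k)).symm
          _ ≤ c k ^ (m'+2) := pow_le_pow_right₀ hc1 (by omega)
        · positivity
        · apply pow_le_pow_right₀ (by linarith)
          omega
      calc min ((nn:ℝ)) (c k * c k / (2*(r:ℝ))^(r+1)) ≤ c k * c k / (2*(r:ℝ))^(r+1) :=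
        min_le_right _ _
      _ ≤ c k ^ (m'+2) / (2*(r:ℝ))^(m'+1) := hfinal
      _ ≤ (nn:ℝ) * ((nn:ℝ)^(m'+1) * P^S / (2*(r:ℝ))^(m'+1)) := hchain
  -- Step 5: assemble
  have hNlb : (nn:ℝ) / (2*r) ≤ ((nn / r : ℕ) : ℝ) := nat_div_cast_ge nn r (by omega) hn2r
  have hQ0 : 0 ≤ Q := le_trans (Finset.prod_nonneg hg0) hQlb
  have hprod0 : (0:ℝ) ≤ ∏ l ∈ Finset.Icc 1 r, min 1 ((nn:ℝ) * P^l / (2*r)) := by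
    apply Finset.prod_nonneg
    intro l hl
    exact le_min (by norm_num) (by positivity)
  calc min ((nn:ℝ)) (c k * c k / (2*(r:ℝ))^(r+1)) / ((2*(r:ℝ)) * 2^r)
      ≤ ((nn:ℝ) * ∏ l ∈ Finset.Icc 1 r, min 1 ((nn:ℝ) * P^l / (2*r))) / ((2*(r:ℝ)) * 2^r) := by
        apply div_le_div_of_nonneg_right hstep4 (by positivity)
  _ = ((nn:ℝ) / (2*r)) * ((∏ l ∈ Finset.Icc 1 r, min 1 ((nn:ℝ) * P^l / (2*r))) / 2^r) := by
        field_simp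
  _ ≤ ((nn / r : ℕ) : ℝ) * ((∏ l ∈ Finset.Icc 1 r, min 1 ((nn:ℝ) * P^l / (2*r))) / 2^r) := by
        apply mul_le_mul_of_nonneg_right hNlb
        positivity
  _ = ((nn / r : ℕ) : ℝ) * ((∏ j ∈ Finset.range r, min 1 ((nn:ℝ) * P^(r-j) / (2*r))) / 2^r) := by
        rw [hreidx]
  _ ≤ ((nn / r : ℕ) : ℝ) * Q := by
        apply mul_le_mul_of_nonneg_left _ (Nat.cast_nonneg _)
        rw [← hQsplit]
        exact hQlb

/-- For bootstrap percolation with threshold `r ≥ 2` and `p`-random initial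
occupation of `B_n`, if `n ≫ p^{−γ}` with `γ = (m̂+1)(2r−m̂)/(2(m̂+2))` and
`m̂ = ⌈(√(9+8r)−5)/2⌉`, then the probability that `B_n` contains a packed strip
tends to `1` as `p → 0`. -/
theorem stmt14 (r : ℕ) (hr : 2 ≤ r)
    (mhat : ℤ) (hmhat : mhat = ⌈(Real.sqrt (9 + 8 * (r : ℝ)) - 5) / 2⌉)
    (γ : ℝ) (hγ : γ = ((mhat : ℝ) + 1) * (2 * (r : ℝ) - (mhat : ℝ)) / (2 * ((mhat : ℝ) + 2)))
    (p : ℕ → ℝ) (hp : ∀ k, 0 < p k ∧ p k < 1)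
    (hp0 : Filter.Tendsto p Filter.atTop (nhds 0))
    (n : ℕ → ℕ)
    (hn : Filter.Tendsto (fun k => (n k : ℝ) * p k ^ γ) Filter.atTop Filter.atTop) :
    Filter.Tendsto
      (fun k => siteMeasure (n k) (p k) {ω | HasPackedStrip r (n k) ω})
      Filter.atTop (nhds 1) := by
  obtain ⟨hγpos, hkey⟩ := gamma_facts r hr mhat hmhat γ hγ
  have hNQ := NQ_atTop r hr γ hγpos hkey p hp n hn
  set Q : ℕ → ℝ :=
    fun k => ∏ j ∈ Finset.range r, (1 - (1 - p k ^ (r - j)) ^ (n k / (r - j))) with hQdef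
  set N : ℕ → ℕ := fun k => n k / r with hNdef
  have hQmem : ∀ k, 0 ≤ Q k ∧ Q k ≤ 1 := by
    intro k
    have hp0' := (hp k).1
    have hp1' := (hp k).2
    have hfac : ∀ j ∈ Finset.range r,
        (0:ℝ) ≤ 1 - (1 - p k ^ (r - j)) ^ (n k / (r - j)) := by
      intro j hj
      have h1 : (0:ℝ) ≤ 1 - p k ^ (r - j) := by
        have := pow_le_one₀ (le_of_lt hp0') (le_of_lt hp1') (n := r - j); linarith
      have h2 : (1 - p k ^ (r - j)) ^ (n k / (r - j)) ≤ 1 :=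
        pow_le_one₀ h1 (by have := pow_nonneg (le_of_lt hp0') (r - j); linarith)
      linarith
    refine ⟨Finset.prod_nonneg hfac, Finset.prod_le_one hfac ?_⟩
    intro j hj
    have h1 : (0:ℝ) ≤ (1 - p k ^ (r - j)) ^ (n k / (r - j)) := by
      apply pow_nonneg
      have := pow_le_one₀ (le_of_lt hp0') (le_of_lt hp1') (n := r - j); linarith
    linarith
  have hA0 : ∀ k, 0 ≤ (1 - Q k) ^ (N k) :=
    fun k => pow_nonneg (by linarith [(hQmem k).2]) _
  have hAle : ∀ k, (1 - Q k)^(N k) ≤ 1 / (1 + (N k : ℝ) * Q k) := fun k =>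
    pow_one_sub_le (Q k) (hQmem k).1 (hQmem k).2 (N k)
  have h1NQ : Filter.Tendsto (fun k => 1 + (N k : ℝ) * Q k) Filter.atTop Filter.atTop :=
    tendsto_atTop_add_const_left _ 1 hNQ
  have hinv : Filter.Tendsto (fun k => 1 / (1 + (N k : ℝ) * Q k)) Filter.atTop (nhds 0) := by
    have := h1NQ.inv_tendsto_atTop
    simp only [one_div]
    exact this
  have hAtend : Filter.Tendsto (fun k => (1 - Q k)^(N k)) Filter.atTop (nhds 0) :=
    squeeze_zero hA0 hAle hinv
  have hlow : Filter.Tendsto (fun k => ENNReal.ofReal (1 - (1 - Q k)^(N k)))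
      Filter.atTop (nhds 1) := by
    have h3 : Filter.Tendsto (fun k => 1 - (1 - Q k)^(N k)) Filter.atTop (nhds 1) := by
      have h4 : Filter.Tendsto (fun _ : ℕ => (1:ℝ)) Filter.atTop (nhds 1) :=
        tendsto_const_nhds
      have h5 := h4.sub hAtend
      simpa using h5
    have h2 := ENNReal.tendsto_ofReal h3
    simpa using h2
  apply tendsto_of_tendsto_of_tendsto_of_le_of_le hlow tendsto_const_nhds
  · intro k
    exact part1 (n k) r (by omega) (p k) (le_of_lt (hp k).1) (le_of_lt (hp k).2)
  · intro k
    exact prob_le_one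
end
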